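/- Let K be a positive natural number, let x ∈ {−1,+1}^K be a binary vector, let h₀ ∈ ℤ^K, and let s ∈ {−1,+1}. Suppose T is a natural number with 2T ≥ |h₀_i| + 1 for every index i, and set h_T = h₀ + 2T·s·x. Then the visible weights w = sign(h_T) (componentwise) satisfy sign(⟨x, w⟩) = s; that is, the visible pre-activation of the neuron on input x has the desired sign s. -/
import Mathlib


/-- sign function: -1 for negative inputs, +1 otherwise. -/
def sgnZ (z : ℤ) : ℤ := if z < 0 then -1 else 1

lemma sgnZ_term (h x s T : ℤ) (hx : x = -1 ∨ x = 1) (hs : s = -1 ∨ s = 1)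
    (hT : 2 * T ≥ |h| + 1) : sgnZ (h + 2 * T * s * x) = s * x := by
  have h1 : h ≤ |h| := le_abs_self h
  have h2 : -|h| ≤ h := neg_abs_le h
  rcases hx with hx | hx <;> rcases hs with hs | hs <;>
      subst hx <;> subst hs <;> simp only [sgnZ]
  · rw [if_neg (by linarith)]; ring
  · rw [if_pos (by linarith)]; ring
  · rw [if_pos (by linarith)]; ring
  · rw [if_neg (by linarith)]; ring

/-- After `T` updates with `2 T ≥ |h₀ i| + 1` for all `i`, the visible weights
`w = sign (h_T)` of `h_T = h₀ + 2 T s x` yield a pre-activation on input `x`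
with the desired sign: `sign ⟨x, w⟩ = s`. -/
theorem stmt7 (K : ℕ) (hK : 0 < K)
    (x : Fin K → ℤ) (hx : ∀ i, x i = -1 ∨ x i = 1)
    (h0 : Fin K → ℤ) (s : ℤ) (hs : s = -1 ∨ s = 1)
    (T : ℕ) (hT : ∀ i, 2 * (T : ℤ) ≥ |h0 i| + 1) :
    sgnZ (∑ i, x i * sgnZ (h0 i + 2 * (T : ℤ) * s * x i)) = s := by
  have key : ∀ i, x i * sgnZ (h0 i + 2 * (T : ℤ) * s * x i) = s := by
    intro i
    rw [sgnZ_term (h0 i) (x i) s T (hx i) hs (hT i)]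
    rcases hx i with h | h <;> rw [h] <;> ring
  rw [Finset.sum_congr rfl (fun i _ => key i), Finset.sum_const,
    Finset.card_univ, Fintype.card_fin]
  have hK' : (0:ℤ) < K := by exact_mod_cast hK
  rcases hs with h | h <;> subst h <;> simp only [sgnZ, nsmul_eq_mul]
  · rw [if_pos (by linarith)]
  · rw [if_neg (by linarith)]
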